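/- For any category X and any copresheaf M : X ⥤ Type, the functor (Xᵒᵖ ⥤ Type)ᵒᵖ ⥤ (X ⥤ Type) sending A to A ⧀ M has a left adjoint; equivalently, there is a functor ▷ together with bijections Hom_{X ⥤ Type}(N, A ⧀ M) ≅ Hom_{Xᵒᵖ ⥤ Type}(A, N ▷ M), natural in A and N. -/

import Mathlib

open CategoryTheory Opposite

universe u

/-- The pointwise complement `A ⧀ M` of a presheaf `A` in a copresheaf `M`. -/
@[simps]
def cmpl {X : Type u} [Category.{u} X] (A : Xᵒᵖ ⥤ Type u) (M : X ⥤ Type u) :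
    X ⥤ Type u where
  obj x := A.obj (op x) → M.obj x
  map {x y} f := TypeCat.ofHom fun φ => fun a => M.map f (φ (A.map f.op a))
  map_id := by intro x; ext φ a; simp
  map_comp := by intros; ext φ a; simp

/-- For a fixed copresheaf `M`, the contravariant functor `A ↦ A ⧀ M` from presheaves
to copresheaves. -/
@[simps]
def cmplContra {X : Type u} [Category.{u} X] (M : X ⥤ Type u) :
    (Xᵒᵖ ⥤ Type u)ᵒᵖ ⥤ (X ⥤ Type u) where
  obj A := cmpl A.unop M
  map {A B} η :=
    { app := fun x => TypeCat.ofHom fun φ => fun b => φ (η.unop.app (op x) b)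
      naturality := by
        intro x y f
        ext φ
        funext b
        show M.map f (φ ((unop A).map f.op (η.unop.app (op y) b))) =
          M.map f (φ (η.unop.app (op x) ((unop B).map f.op b)))
        exact congrArg (fun t => M.map f (φ t))
          (ConcreteCategory.congr_hom (η.unop.naturality f.op) b).symm }
  map_id := by intro A; ext x φ; rfl
  map_comp := by intros; ext x φ; rfl

/-- The candidate left adjoint at the object level: `N ▷ M` as a presheaf. -/
@[simps]
def rTri {X : Type u} [Category.{u} X] (N M : X ⥤ Type u) : Xᵒᵖ ⥤ Type u where
  obj x := N ⟶ cmpl (yoneda.obj x.unop) M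
  map {x y} g := TypeCat.ofHom fun η => η ≫ (cmplContra M).map (yoneda.map g.unop).op
  map_id := by
    intro x
    ext η : 1
    ext x' n
    funext f
    simp [cmplContra]
  map_comp := by
    intro x y z g h
    ext η : 1
    ext x' n
    funext f
    simp [cmplContra]

/-- The hom-set bijection of the adjunction. -/
@[simps]
def rTriEquiv {X : Type u} [Category.{u} X] (M : X ⥤ Type u) (N : X ⥤ Type u)
    (A : (Xᵒᵖ ⥤ Type u)ᵒᵖ) :
    ((op (rTri N M) : (Xᵒᵖ ⥤ Type u)ᵒᵖ) ⟶ A) ≃ (N ⟶ (cmplContra M).obj A) where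
  toFun h :=
    { app := fun x => TypeCat.ofHom fun n a => (h.unop.app (op x) a).app x n (𝟙 x)
      naturality := by
        intro x y u
        ext n
        show (fun a => (h.unop.app (op y) a).app y (N.map u n) (𝟙 y)) =
          (fun a => M.map u ((h.unop.app (op x) (A.unop.map u.op a)).app x n (𝟙 x)))
        funext a
        have h1 := ConcreteCategory.congr_hom (h.unop.naturality u.op) a
        have h2 : h.unop.app (op x) (A.unop.map u.op a)
            = (rTri N M).map u.op (h.unop.app (op y) a) := h1
        rw [h2]
        show (h.unop.app (op y) a).app y (N.map u n) (𝟙 y)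
          = M.map u ((h.unop.app (op y) a).app x n (𝟙 x ≫ u))
        have h3 := ConcreteCategory.congr_hom ((h.unop.app (op y) a).naturality u) n
        have h4 := congrFun h3 (𝟙 y)
        refine h4.trans ?_
        show M.map u ((h.unop.app (op y) a).app x n (u ≫ 𝟙 y)) = _
        simp }
  invFun α := Quiver.Hom.op
    { app := fun x => TypeCat.ofHom fun a =>
        { app := fun x' => TypeCat.ofHom fun n f => α.app x' n (A.unop.map f.op a)
          naturality := by
            intro x' x'' u
            ext n
            show (fun f => α.app x'' (N.map u n) (A.unop.map f.op a)) =
              (fun f => M.map u (α.app x' n (A.unop.map ((yoneda.obj x.unop).map u.op f).op a)))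
            funext f
            have h1 := ConcreteCategory.congr_hom (α.naturality u) n
            have h2 := congrFun h1 (A.unop.map f.op a)
            simp only [cmpl_map, types_comp_apply] at h2
            rw [h2]
            exact congrArg (fun t => M.map u (α.app x' n t))
              (FunctorToTypes.map_comp_apply (unop A) f.op u.op a).symm }
      naturality := by
        intro x y g
        ext a
        apply NatTrans.ext
        funext x'
        ext n
        funext f
        exact (congrArg (α.app x' n)
          (FunctorToTypes.map_comp_apply (unop A) g f.op a)).symm }
  left_inv h := by
    apply Quiver.Hom.unop_inj
    apply NatTrans.ext
    funext x
    obtain ⟨x⟩ := x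
    ext a
    apply NatTrans.ext
    funext x'
    ext n
    funext f
    show (h.unop.app (op x') ((unop A).map f.op a)).app x' n (𝟙 x')
      = (h.unop.app (op x) a).app x' n f
    rw [show (h.unop.app (op x') ((unop A).map f.op a))
        = (rTri N M).map f.op (h.unop.app (op x) a) from
      ConcreteCategory.congr_hom (h.unop.naturality f.op) a]
    show (h.unop.app (op x) a).app x' n (𝟙 x' ≫ f) = (h.unop.app (op x) a).app x' n f
    simp
  right_inv α := by
    ext x n
    funext a
    show α.app x n (A.unop.map (𝟙 (op x)) a) = α.app x n a
    simp

theorem rTriEquiv_he {X : Type u} [Category.{u} X] (M N : X ⥤ Type u) :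
    ∀ (A A' : (Xᵒᵖ ⥤ Type u)ᵒᵖ) (g : A ⟶ A') (h : (op (rTri N M)) ⟶ A),
      rTriEquiv M N A' (h ≫ g) = rTriEquiv M N A h ≫ (cmplContra M).map g := by
  intro A A' g h
  ext x n a
  rfl

/-- for any copresheaf `M`, the contravariant functor `A ↦ A ⧀ M`
from `(Xᵒᵖ ⥤ Type)ᵒᵖ` to `X ⥤ Type` has a left adjoint; equivalently there is a
functor `▷` together with bijections `Hom(N, A ⧀ M) ≅ Hom(A, N ▷ M)`,
natural in `A` and `N`. -/
theorem cmplContra_isRightAdjoint (X : Type u) [Category.{u} X] (M : X ⥤ Type u) :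
    (cmplContra M).IsRightAdjoint := by
  exact ⟨_, ⟨CategoryTheory.Adjunction.adjunctionOfEquivLeft
    (G := cmplContra M) (F_obj := fun N => op (rTri N M))
    (fun N A => rTriEquiv M N A) (fun N A A' g h => rTriEquiv_he M N A A' g h)⟩⟩
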